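/- Let a ≥ 0, b > 0, M > 0, and define ω*(S) = Proj_{[−M,M]}(−(1/b)·shrink(S, a)). Let g : [0, ∞) → ℝ be continuous and monotone nondecreasing with |g(0)| ≤ a, and suppose there exists α₀ with |g(α₀)| > a. Then α* := sup{α ≥ 0 : |g(α)| ≤ a} is finite, ω*(g(α)) = 0 for every α ∈ [0, α*], and ω*(g(α)) ≠ 0 for every α > α*. -/
import Mathlib

/-- The soft-thresholding operator `shrink(z, λ) = sign(z) · max(|z| − λ, 0)`. -/
noncomputable def shrink (z lam : ℝ) : ℝ := Real.sign z * max (|z| - lam) 0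

/-- Clamping (Euclidean projection) onto the interval `[−M, M]`. -/
noncomputable def projI (M x : ℝ) : ℝ := min (max x (-M)) M

lemma shrink_eq_zero_iff {z a : ℝ} (ha : 0 ≤ a) : shrink z a = 0 ↔ |z| ≤ a := by
  unfold shrink
  constructor
  · intro h
    by_contra hz
    push_neg at hz
    have hz0 : z ≠ 0 := by
      intro h0; rw [h0] at hz; simp at hz; linarith
    have h1 : Real.sign z ≠ 0 := fun h => hz0 (Real.sign_eq_zero_iff.mp h)
    have h2 : max (|z| - a) 0 ≠ 0 := by
      have : 0 < |z| - a := by linarith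
      positivity
    exact (mul_ne_zero h1 h2) h
  · intro h
    have : max (|z| - a) 0 = 0 := max_eq_right (by linarith)
    rw [this, mul_zero]

lemma projI_eq_zero_iff {M x : ℝ} (hM : 0 < M) : projI M x = 0 ↔ x = 0 := by
  unfold projI
  constructor
  · intro h
    rcases le_total x (-M) with hx | hx
    · rw [max_eq_right hx, min_eq_left (by linarith)] at h; linarith
    · rw [max_eq_left hx] at h
      rcases le_total x M with hx2 | hx2
      · rwa [min_eq_left hx2] at h
      · rw [min_eq_right hx2] at h; linarith
  · intro h; rw [h]; rw [max_eq_left (by linarith), min_eq_left (by linarith)]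

lemma omega_eq_zero_iff {a b M z : ℝ} (ha : 0 ≤ a) (hb : 0 < b) (hM : 0 < M) :
    projI M (-(1 / b) * shrink z a) = 0 ↔ |z| ≤ a := by
  rw [projI_eq_zero_iff hM, mul_eq_zero]
  have hb' : -(1 / b) ≠ 0 := by
    simp only [ne_eq, neg_eq_zero, one_div, inv_eq_zero]
    exact hb.ne'
  rw [shrink_eq_zero_iff ha] at *
  constructor
  · rintro (h | h)
    · exact absurd h hb'
    · exact h
  · intro h; right; exact h

/-- Stress-threshold existence: let `a ≥ 0`, `b > 0`, `M > 0`,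
`ω*(S) = Proj_{[−M,M]}(−(1/b)·shrink(S, a))`, and let `g : [0, ∞) → ℝ` be
continuous and monotone nondecreasing with `|g(0)| ≤ a` and `|g(α₀)| > a` for
some `α₀ ≥ 0`. Then `α* = sup {α ≥ 0 : |g(α)| ≤ a}` is finite (the set is
nonempty and bounded above), `ω*(g(α)) = 0` for every `α ∈ [0, α*]`, and
`ω*(g(α)) ≠ 0` for every `α > α*`. -/
theorem stmt9 (a b M : ℝ) (ha : 0 ≤ a) (hb : 0 < b) (hM : 0 < M)
    (g : ℝ → ℝ) (hgc : ContinuousOn g (Set.Ici 0))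
    (hgm : MonotoneOn g (Set.Ici 0))
    (hg0 : |g 0| ≤ a) (hex : ∃ α₀ : ℝ, 0 ≤ α₀ ∧ a < |g α₀|) :
    ({α : ℝ | 0 ≤ α ∧ |g α| ≤ a}).Nonempty ∧
    BddAbove {α : ℝ | 0 ≤ α ∧ |g α| ≤ a} ∧
    (∀ α ∈ Set.Icc (0 : ℝ) (sSup {α : ℝ | 0 ≤ α ∧ |g α| ≤ a}),
      projI M (-(1 / b) * shrink (g α) a) = 0) ∧
    (∀ α : ℝ, sSup {α : ℝ | 0 ≤ α ∧ |g α| ≤ a} < α →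
      projI M (-(1 / b) * shrink (g α) a) ≠ 0) := by
  obtain ⟨α₀, hα₀, hα₀a⟩ := hex
  set T := {α : ℝ | 0 ≤ α ∧ |g α| ≤ a} with hT
  have hTne : T.Nonempty := ⟨0, le_refl 0, hg0⟩
  have hg0' : -a ≤ g 0 := (abs_le.mp hg0).1
  have hgα₀ : a < g α₀ := by
    rcases lt_abs.mp hα₀a with h | h
    · exact h
    · exfalso
      have := hgm (Set.self_mem_Ici) (Set.mem_Ici.mpr hα₀) hα₀
      linarith
  have hTbdd : BddAbove T := by
    refine ⟨α₀, fun β hβ => ?_⟩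
    by_contra hlt
    push_neg at hlt
    have h1 : g α₀ ≤ g β := hgm (Set.mem_Ici.mpr hα₀) (Set.mem_Ici.mpr hβ.1) hlt.le
    have h2 : g β ≤ |g β| := le_abs_self _
    have := hβ.2
    linarith
  have hTclosed : IsClosed T := by
    have : T = Set.Ici 0 ∩ g ⁻¹' Set.Icc (-a) a := by
      ext x
      simp only [hT, Set.mem_setOf_eq, Set.mem_inter_iff, Set.mem_Ici, Set.mem_preimage,
        Set.mem_Icc, abs_le]
    rw [this]
    exact hgc.preimage_isClosed_of_isClosed isClosed_Ici isClosed_Icc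
  have hsmem : sSup T ∈ T := hTclosed.csSup_mem hTne hTbdd
  have hs0 : (0:ℝ) ≤ sSup T := le_csSup hTbdd ⟨le_refl 0, hg0⟩
  refine ⟨hTne, hTbdd, ?_, ?_⟩
  · rintro α ⟨hα0, hαs⟩
    rw [omega_eq_zero_iff ha hb hM, abs_le]
    constructor
    · have := hgm Set.self_mem_Ici (Set.mem_Ici.mpr hα0) hα0
      linarith
    · have h1 : g α ≤ g (sSup T) := hgm (Set.mem_Ici.mpr hα0) (Set.mem_Ici.mpr hsmem.1) hαs
      have h2 := (abs_le.mp hsmem.2).2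
      linarith
  · intro α hα h
    rw [omega_eq_zero_iff ha hb hM] at h
    have hα0 : (0:ℝ) ≤ α := le_of_lt (lt_of_le_of_lt hs0 hα)
    have : α ∈ T := ⟨hα0, h⟩
    exact absurd (le_csSup hTbdd this) (not_le.mpr hα)
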